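/- arXiv:2001.10290 — 6 statements merged into one kernel-verified Lean document; each statement's English description precedes it below -/
import Mathlib

section
/- The type-1 discrete set Fourier transform, defined by (F s)_B = Σ_{A⊆N, A∩B=∅} s_A, is invertible with inverse (F⁻¹ ŝ)_A = Σ_{B⊆N, A∪B=N} (−1)^{|A∩B|} ŝ_B. -/
open Finset

/-- Type-1 discrete set Fourier transform. -/
def dsft1 {N : Type*} [Fintype N] [DecidableEq N] (s : Finset N → ℝ) (B : Finset N) : ℝ :=
  ∑ A ∈ (univ : Finset N).powerset.filter (fun A => A ∩ B = ∅), s A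

/-- Inverse type-1 DSFT. -/
def idsft1 {N : Type*} [Fintype N] [DecidableEq N] (t : Finset N → ℝ) (A : Finset N) : ℝ :=
  ∑ B ∈ (univ : Finset N).powerset.filter (fun B => A ∪ B = univ),
    (-1 : ℝ) ^ (A ∩ B).card * t B

/-!
Replacing `B` by its complement, `dsft1` becomes the zeta transform of the Boolean lattice
(summation over subsets) and `idsft1 t` the Möbius transform of `t ∘ compl`. The theorem is then
Möbius inversion on the Boolean lattice: its Möbius function `(-1) ^ #(S \ C)` sums to zero over
every interval `[A, S]` with `A ≠ S`, because such an interval is a powerset of `S \ A`.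
-/

namespace Finset

variable {α R : Type*} [DecidableEq α] [Ring R]

theorem sum_powerset_neg_one_pow_card_eq_ite (x : Finset α) :
    ∑ m ∈ x.powerset, (-1 : R) ^ #m = if x = ∅ then 1 else 0 := by
  have h := congrArg (Int.cast : ℤ → R) (sum_powerset_neg_one_pow_card (x := x))
  push_cast at h
  rw [h]

theorem sum_Icc_neg_one_pow_card_sdiff_left (A S : Finset α) :
    ∑ C ∈ Icc A S, (-1 : R) ^ #(C \ A) = if A = S then 1 else 0 := by
  by_cases hAS : A ⊆ S
  · have : ∑ C ∈ Icc A S, (-1 : R) ^ #(C \ A) = ∑ D ∈ (S \ A).powerset, (-1 : R) ^ #D :=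
      sum_nbij' (· \ A) (A ∪ ·)
        (fun C hC => mem_powerset.2 (sdiff_subset_sdiff (mem_Icc.1 hC).2 subset_rfl))
        (fun D hD => mem_Icc.2
          ⟨subset_union_left, union_subset hAS ((mem_powerset.1 hD).trans sdiff_subset)⟩)
        (fun C hC => union_sdiff_of_subset (mem_Icc.1 hC).1)
        (fun D hD => union_sdiff_cancel_left (disjoint_sdiff.mono_right (mem_powerset.1 hD)))
        (fun _ _ => rfl)
    simp only [this, sum_powerset_neg_one_pow_card_eq_ite, sdiff_eq_empty_iff_subset]
    exact if_congr ⟨subset_antisymm hAS, fun h => h ▸ subset_rfl⟩ rfl rfl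
  · rw [Icc_eq_empty (fun h => hAS h), sum_empty, if_neg (fun h => hAS h.subset)]

theorem sum_Icc_neg_one_pow_card_sdiff_right (A S : Finset α) :
    ∑ C ∈ Icc A S, (-1 : R) ^ #(S \ C) = if A = S then 1 else 0 := by
  by_cases hAS : A ⊆ S
  · have : ∑ C ∈ Icc A S, (-1 : R) ^ #(S \ C) = ∑ D ∈ (S \ A).powerset, (-1 : R) ^ #D :=
      sum_nbij' (S \ ·) (S \ ·)
        (fun C hC => mem_powerset.2 (sdiff_subset_sdiff subset_rfl (mem_Icc.1 hC).1))
        (fun D hD => mem_Icc.2 ⟨subset_sdiff.2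
          ⟨hAS, (disjoint_sdiff_self_left.mono_left (mem_powerset.1 hD)).symm⟩, sdiff_subset⟩)
        (fun C hC => sdiff_sdiff_eq_self (mem_Icc.1 hC).2)
        (fun D hD => sdiff_sdiff_eq_self ((mem_powerset.1 hD).trans sdiff_subset))
        (fun _ _ => rfl)
    simp only [this, sum_powerset_neg_one_pow_card_eq_ite, sdiff_eq_empty_iff_subset]
    exact if_congr ⟨subset_antisymm hAS, fun h => h ▸ subset_rfl⟩ rfl rfl
  · rw [Icc_eq_empty (fun h => hAS h), sum_empty, if_neg (fun h => hAS h.subset)]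

theorem sum_powerset_sum_powerset_comm {M : Type*} [AddCommMonoid M] (S : Finset α)
    (F : Finset α → Finset α → M) :
    ∑ C ∈ S.powerset, ∑ A ∈ C.powerset, F C A = ∑ A ∈ S.powerset, ∑ C ∈ Icc A S, F C A :=
  sum_comm' fun C A => by
    simp only [mem_powerset, mem_Icc]
    exact ⟨fun ⟨hCS, hAC⟩ => ⟨⟨hAC, hCS⟩, hAC.trans hCS⟩, fun ⟨⟨hAC, hCS⟩, _⟩ => ⟨hCS, hAC⟩⟩

end Finset

section MoebiusInversion

variable {α R : Type*} [DecidableEq α] [Ring R]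

def zetaTransform {M : Type*} [AddCommMonoid M] (f : Finset α → M) (S : Finset α) : M :=
  ∑ A ∈ S.powerset, f A

def moebiusTransform (g : Finset α → R) (S : Finset α) : R :=
  ∑ C ∈ S.powerset, (-1) ^ #(S \ C) * g C

theorem moebiusTransform_zetaTransform (f : Finset α → R) :
    moebiusTransform (zetaTransform f) = f := by
  funext S
  calc moebiusTransform (zetaTransform f) S
      = ∑ C ∈ S.powerset, ∑ A ∈ C.powerset, (-1) ^ #(S \ C) * f A := by
        simp only [moebiusTransform, zetaTransform, mul_sum]
    _ = ∑ A ∈ S.powerset, (∑ C ∈ Icc A S, (-1) ^ #(S \ C)) * f A := by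
        simp only [sum_powerset_sum_powerset_comm, sum_mul]
    _ = f S := by
        simp [sum_Icc_neg_one_pow_card_sdiff_right]

theorem zetaTransform_moebiusTransform (g : Finset α → R) :
    zetaTransform (moebiusTransform g) = g := by
  funext S
  calc zetaTransform (moebiusTransform g) S
      = ∑ C ∈ S.powerset, ∑ A ∈ C.powerset, (-1) ^ #(C \ A) * g A := rfl
    _ = ∑ A ∈ S.powerset, (∑ C ∈ Icc A S, (-1) ^ #(C \ A)) * g A := by
        simp only [sum_powerset_sum_powerset_comm, sum_mul]
    _ = g S := by
        simp [sum_Icc_neg_one_pow_card_sdiff_left]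

end MoebiusInversion

section DSFT

variable {N : Type*} [Fintype N] [DecidableEq N]

theorem dsft1_eq_zetaTransform (s : Finset N → ℝ) (B : Finset N) :
    dsft1 s B = zetaTransform s Bᶜ := by
  unfold dsft1 zetaTransform
  congr 1
  ext A
  simp [subset_compl_iff_disjoint_right, disjoint_iff_inter_eq_empty]

theorem idsft1_eq_moebiusTransform (t : Finset N → ℝ) :
    idsft1 t = moebiusTransform (t ∘ compl) := by
  funext A
  refine sum_nbij' compl compl (fun B hB => ?_) (fun C hC => ?_) (fun B _ => compl_compl B)
    (fun C _ => compl_compl C) (fun B _ => ?_)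
  · simpa [subset_iff, eq_univ_iff_forall, or_iff_not_imp_right] using hB
  · simpa [subset_iff, eq_univ_iff_forall, or_iff_not_imp_right] using hC
  · simp [sdiff_compl]

end DSFT

theorem dsft1_inverse {N : Type*} [Fintype N] [DecidableEq N] (s t : Finset N → ℝ) :
    idsft1 (dsft1 s) = s ∧ dsft1 (idsft1 t) = t := by
  have hdsft1 : dsft1 s ∘ compl = zetaTransform s := by
    funext B
    simp [dsft1_eq_zetaTransform]
  refine ⟨?_, funext fun B => ?_⟩
  · rw [idsft1_eq_moebiusTransform, hdsft1, moebiusTransform_zetaTransform]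
  · rw [dsft1_eq_zetaTransform, idsft1_eq_moebiusTransform, zetaTransform_moebiusTransform,
      Function.comp_apply, compl_compl]
end

section
/- Convolution theorem, type 1: for set functions h, s on the powerset of N, the type-1 DSFT of the covering product equals the pointwise product of the DSFTs: F(h ∗ s)_B = (F h)_B · (F s)_B for all B ⊆ N, where (h ∗ s)_A = Σ_{C∪D=A} h_C s_D and (F s)_B = Σ_{A∩B=∅} s_A. -/
open Finset

def conv1 {N : Type*} [Fintype N] [DecidableEq N] (h s : Finset N → ℝ) (A : Finset N) : ℝ :=
  ∑ C ∈ (univ : Finset N).powerset, ∑ D ∈ (univ : Finset N).powerset,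
    if C ∪ D = A then h C * s D else 0

theorem sum_filter_conv1 {N : Type*} [Fintype N] [DecidableEq N] (p : Finset N → Prop)
    [DecidablePred p] (h s : Finset N → ℝ) :
    ∑ A ∈ (univ : Finset N).powerset.filter p, conv1 h s A =
      ∑ C ∈ (univ : Finset N).powerset, ∑ D ∈ (univ : Finset N).powerset,
        if p (C ∪ D) then h C * s D else 0 := by
  unfold conv1
  rw [sum_comm]
  refine sum_congr rfl fun C _ => ?_
  rw [sum_comm]
  refine sum_congr rfl fun D _ => ?_
  simp [sum_ite_eq]

theorem conv_theorem_type1 {N : Type*} [Fintype N] [DecidableEq N]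
    (h s : Finset N → ℝ) (B : Finset N) :
    dsft1 (conv1 h s) B = dsft1 h B * dsft1 s B := by
  unfold dsft1
  rw [sum_filter_conv1, sum_filter, sum_filter, sum_mul_sum]
  refine sum_congr rfl fun C _ => sum_congr rfl fun D _ => ?_
  simp only [ite_zero_mul_ite_zero, union_inter_distrib_right, union_eq_empty]
end

section
/- Eigenvector property of type-1 shifts: let f^B be the set function f^B_A = (−1)^{|A∩B|} if A ∪ B = N and 0 otherwise. Then for x ∈ N, the type-1 shift T_x satisfies T_x f^B = f^B if x ∉ B, and T_x f^B = 0 if x ∈ B. -/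
open Finset

def shift1 {N : Type*} [DecidableEq N] (x : N) (s : Finset N → ℝ) (A : Finset N) : ℝ :=
  if x ∈ A then s A + s (A.erase x) else 0

/-- Fourier basis vector of model 1. -/
def fb1 {N : Type*} [Fintype N] [DecidableEq N] (B : Finset N) (A : Finset N) : ℝ :=
  if A ∪ B = univ then (-1 : ℝ) ^ (A ∩ B).card else 0

theorem shift1_eigen {N : Type*} [Fintype N] [DecidableEq N] (B : Finset N) (x : N) :
    (x ∉ B → shift1 x (fb1 B) = fb1 B) ∧
    (x ∈ B → shift1 x (fb1 B) = fun _ => 0) := by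
  constructor
  · intro hxB
    funext A
    simp only [shift1, fb1]
    by_cases hxA : x ∈ A
    · have h1 : ¬ (A.erase x ∪ B = univ) := by
        intro h
        have : x ∈ A.erase x ∪ B := h ▸ mem_univ x
        simp [hxB] at this
      simp [hxA, h1]
    · have h2 : ¬ (A ∪ B = univ) := by
        intro h
        have : x ∈ A ∪ B := h ▸ mem_univ x
        simp [hxA, hxB] at this
      simp [hxA, h2]
  · intro hxB
    funext A
    simp only [shift1, fb1]
    by_cases hxA : x ∈ A
    · have hu : A.erase x ∪ B = A ∪ B := by
        ext y
        by_cases hy : y = x <;> simp [hy, hxB, hxA]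
      have hc : (A ∩ B).card = (A.erase x ∩ B).card + 1 := by
        have : A ∩ B = insert x (A.erase x ∩ B) := by
          ext y
          by_cases hy : y = x <;> simp [hy, hxB, hxA]
        rw [this, card_insert_of_notMem (by simp)]
      by_cases h : A ∪ B = univ
      · simp [hxA, h, hu, hc, pow_succ]
      · simp [hxA, h, hu ▸ h]
    · simp [hxA]
end

section
/- Type-3 spectrum of a generalized coverage function: if s_A = c + w(⋃_{i∈A} S_i) where w is an additive weight function on finite sets, then the type-3 DSFT satisfies ŝ_B = Σ_{A⊆B} (−1)^{|A|} s_A = −w(⋂_{i∈B} S_i) for all nonempty B ⊆ N, and ŝ_∅ = c. -/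
/-! Up to the constant `c + w(U)`, the set function `s` is `A ↦ -w(⋂_{i ∈ A} S_iᶜ)`, and the
inclusion–exclusion principle for intersections of complements says precisely that the type-3
transform of `A ↦ w(⋂_{i ∈ A} T_i)` is `B ↦ w(⋂_{i ∈ B} T_iᶜ)`. Taking `T_i = S_iᶜ` gives
`-w(⋂_{i ∈ B} S_i)`; the constant only contributes at `B = ∅`, where `⋂_{i ∈ ∅} S_i = U`. -/

open Finset

def dsft3 {N : Type*} [Fintype N] [DecidableEq N] (s : Finset N → ℝ) (B : Finset N) : ℝ :=
  ∑ A ∈ B.powerset, (-1 : ℝ) ^ A.card * s A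

section Dsft3

variable {N : Type*} [Fintype N] [DecidableEq N]

lemma dsft3_sub (f g : Finset N → ℝ) (B : Finset N) :
    dsft3 (fun A ↦ f A - g A) B = dsft3 f B - dsft3 g B := by
  simp only [dsft3, mul_sub, sum_sub_distrib]

lemma dsft3_const (c : ℝ) (B : Finset N) : dsft3 (fun _ ↦ c) B = if B = ∅ then c else 0 := by
  have h := congrArg (Int.cast : ℤ → ℝ) (sum_powerset_neg_one_pow_card (x := B))
  push_cast at h
  rw [dsft3, ← sum_mul, h, ite_mul, one_mul, zero_mul]

lemma dsft3_sum_inf_compl {U : Type*} [Fintype U] [DecidableEq U]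
    (S : N → Finset U) (w : U → ℝ) (B : Finset N) :
    dsft3 (fun A ↦ ∑ u ∈ A.inf fun i ↦ (S i)ᶜ, w u) B = ∑ u ∈ B.inf S, w u := by
  simpa [dsft3] using (inclusion_exclusion_sum_inf_compl B (fun i ↦ (S i)ᶜ) w).symm

end Dsft3

lemma sum_biUnion_eq_sum_univ_sub_sum_inf_compl {N U G : Type*} [Fintype U] [DecidableEq U]
    [AddCommGroup G] (S : N → Finset U) (w : U → G) (A : Finset N) :
    ∑ u ∈ A.biUnion S, w u = ∑ u, w u - ∑ u ∈ A.inf fun i ↦ (S i)ᶜ, w u := by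
  rw [← Finset.compl_sup, sup_eq_biUnion, eq_sub_iff_add_eq, add_comm, sum_compl_add_sum]

theorem dsft3_generalized_coverage {N U : Type*} [Fintype N] [DecidableEq N]
    [Fintype U] [DecidableEq U]
    (S : N → Finset U) (w : U → ℝ) (c : ℝ) (s : Finset N → ℝ)
    (hs : ∀ A : Finset N, s A = c + ∑ u ∈ A.biUnion S, w u) :
    (∀ B : Finset N, B.Nonempty → dsft3 s B = -∑ u ∈ B.inf S, w u) ∧
    dsft3 s ∅ = c := by
  have hs_compl : s = fun A ↦ (c + ∑ u, w u) - ∑ u ∈ A.inf fun i ↦ (S i)ᶜ, w u := by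
    ext A
    rw [hs, sum_biUnion_eq_sum_univ_sub_sum_inf_compl, add_sub_assoc]
  have hspec (B : Finset N) :
      dsft3 s B = (if B = ∅ then c + ∑ u, w u else 0) - ∑ u ∈ B.inf S, w u := by
    rw [hs_compl, dsft3_sub, dsft3_const, dsft3_sum_inf_compl]
  refine ⟨fun B hB ↦ ?_, ?_⟩
  · rw [hspec, if_neg hB.ne_empty, zero_sub]
  · rw [hspec, if_pos rfl, inf_empty, top_eq_univ, add_sub_cancel_right]
end

section
/- Type-4 spectrum of a generalized coverage function: if s_A = c + w(⋃_{i∈A} S_i) with additive weight w, then for every nonempty B ⊆ N, the type-4 DSFT ŝ_B = Σ_{A⊆N, A∪B=N} (−1)^{|A∩B|} s_A equals −w(⋂_{i∈B} S_i \ ⋃_{i∉B} S_i), and ŝ_∅ = s_N. -/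
open Finset

def dsft4 {N : Type*} [Fintype N] [DecidableEq N] (s : Finset N → ℝ) (B : Finset N) : ℝ :=
  ∑ A ∈ (univ : Finset N).powerset.filter (fun A => A ∪ B = univ),
    (-1 : ℝ) ^ (A ∩ B).card * s A

/-!
A coverage function is, up to a constant, minus a weighted sum of indicators of down-sets:
`u ∈ ⋃_{i ∈ A} S i` fails exactly when `A ⊆ M_u := {i | u ∉ S i}`, so the linear transform
`dsft4` only has to be computed on the indicator of `{A | A ⊆ M}`. The sets `A` with `A ∪ B = N`
are `Bᶜ ∪ T` with `T ⊆ B`; the indicator vanishes unless `Bᶜ ⊆ M`, and then what remains is the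
alternating sum over `T ⊆ B ∩ M`, which is `1` iff `B ∩ M = ∅`. Hence the transform is `1` exactly
when `M = Bᶜ`, and `M_u = Bᶜ` says `u ∈ ⋂_{i ∈ B} S i \ ⋃_{i ∉ B} S i`.
-/

theorem Finset.sum_powerset_neg_one_pow_card_eq_ite_s18 {α R : Type*} [Ring R] [DecidableEq α]
    (x : Finset α) : ∑ m ∈ x.powerset, (-1 : R) ^ #m = if x = ∅ then 1 else 0 := by
  have h := congrArg (Int.cast : ℤ → R) (sum_powerset_neg_one_pow_card (x := x))
  push_cast at h
  simpa [apply_ite (Int.cast : ℤ → R)] using h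

section dsft4

variable {N : Type*} [Fintype N] [DecidableEq N]

theorem dsft4_empty (s : Finset N → ℝ) : dsft4 s ∅ = s univ := by
  simp [dsft4, filter_eq']

theorem compl_union_inter_eq_of_union_eq_univ {A B : Finset N} (h : A ∪ B = univ) :
    Bᶜ ∪ A ∩ B = A := by
  ext x
  have hx : x ∈ A ∪ B := h ▸ mem_univ x
  simp only [mem_union, mem_inter, mem_compl] at hx ⊢
  tauto

theorem dsft4_eq_sum_powerset (s : Finset N → ℝ) (B : Finset N) :
    dsft4 s B = ∑ T ∈ B.powerset, (-1 : ℝ) ^ #T * s (Bᶜ ∪ T) := by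
  refine sum_nbij' (· ∩ B) (Bᶜ ∪ ·) ?_ ?_ ?_ ?_ ?_
  · intro A _
    simp
  · intro T hT
    rw [mem_powerset] at hT
    simp only [mem_filter, mem_powerset, subset_univ, true_and]
    rw [union_assoc, union_eq_right.2 hT, union_comm, union_compl]
  · intro A hA
    exact compl_union_inter_eq_of_union_eq_univ (mem_filter.1 hA).2
  · intro T hT
    rw [mem_powerset] at hT
    rw [union_inter_distrib_right, inter_comm, inter_compl, empty_union, inter_eq_left.2 hT]
  · intro A hA
    rw [compl_union_inter_eq_of_union_eq_univ (mem_filter.1 hA).2]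

theorem dsft4_sub (s t : Finset N → ℝ) (B : Finset N) :
    dsft4 (s - t) B = dsft4 s B - dsft4 t B := by
  simp only [dsft4, Pi.sub_apply, mul_sub, sum_sub_distrib]

theorem dsft4_smul (a : ℝ) (s : Finset N → ℝ) (B : Finset N) :
    dsft4 (a • s) B = a * dsft4 s B := by
  simp only [dsft4, Pi.smul_apply, smul_eq_mul, mul_sum, mul_left_comm]

theorem dsft4_sum {ι : Type*} (t : Finset ι) (s : ι → Finset N → ℝ) (B : Finset N) :
    dsft4 (∑ i ∈ t, s i) B = ∑ i ∈ t, dsft4 (s i) B := by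
  simp only [dsft4, Finset.sum_apply, mul_sum]
  exact sum_comm

theorem dsft4_indicator_Iic (M B : Finset N) :
    dsft4 ((Set.Iic M).indicator 1) B = if M = Bᶜ then 1 else 0 := by
  simp only [dsft4_eq_sum_powerset, Set.indicator_apply, Set.mem_Iic,
    union_subset_iff, Pi.one_apply, mul_ite, mul_one, mul_zero]
  by_cases hBM : Bᶜ ⊆ M
  · have hfilter : B.powerset.filter (· ⊆ M) = (B ∩ M).powerset := by
      ext T; simp only [mem_filter, mem_powerset, subset_inter_iff]
    have hdisj : B ∩ M = ∅ ↔ M = Bᶜ := by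
      rw [← disjoint_iff_inter_eq_empty, ← subset_compl_iff_disjoint_left]
      exact ⟨fun h => h.antisymm hBM, fun h => h.le⟩
    simp only [hBM, true_and, ← sum_filter, hfilter, sum_powerset_neg_one_pow_card_eq_ite_s18, hdisj]
  · simp only [hBM, false_and, if_false, sum_const_zero]
    exact (if_neg fun h => hBM h.ge).symm

end dsft4

section coverage

variable {N U : Type*} [Fintype N] [DecidableEq U]

def indicesMissing (S : N → Finset U) (u : U) : Finset N := {i | u ∉ S i}

@[simp]
theorem mem_indicesMissing {S : N → Finset U} {u : U} {i : N} :
    i ∈ indicesMissing S u ↔ u ∉ S i := by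
  simp [indicesMissing]

theorem mem_biUnion_iff_not_subset_indicesMissing (S : N → Finset U) (A : Finset N) (u : U) :
    u ∈ A.biUnion S ↔ ¬A ⊆ indicesMissing S u := by
  simp [subset_iff]

variable [DecidableEq N] [Fintype U]

theorem indicesMissing_eq_compl_iff (S : N → Finset U) (B : Finset N) (u : U) :
    indicesMissing S u = Bᶜ ↔ u ∈ B.inf S \ (univ \ B).biUnion S := by
  simp only [Finset.ext_iff, mem_indicesMissing, mem_compl, mem_sdiff, mem_inf, mem_biUnion,
    mem_univ, true_and, not_exists, not_and]
  grind

theorem sum_biUnion_eq_sum_sub_sum_indicator (S : N → Finset U) (w : U → ℝ) (A : Finset N) :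
    ∑ u ∈ A.biUnion S, w u =
      ∑ u, w u - ∑ u, w u * (Set.Iic (indicesMissing S u)).indicator 1 A := by
  have hmissed : ∑ u, w u * (Set.Iic (indicesMissing S u)).indicator 1 A
      = ∑ u with u ∉ A.biUnion S, w u := by
    rw [sum_filter]
    refine sum_congr rfl fun u _ => ?_
    simp only [Set.indicator_apply, Set.mem_Iic, Pi.one_apply, mul_ite, mul_one, mul_zero,
      mem_biUnion_iff_not_subset_indicesMissing, not_not]
  rw [hmissed, eq_sub_iff_add_eq, ← sum_filter_add_sum_filter_not univ (· ∈ A.biUnion S),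
    filter_mem_eq_inter, univ_inter]

theorem coverage_eq_sub_sum_indicator (S : N → Finset U) (w : U → ℝ) (c : ℝ) :
    (fun A : Finset N => c + ∑ u ∈ A.biUnion S, w u) =
      (c + ∑ u, w u) • (Set.Iic univ).indicator 1 -
        ∑ u, w u • (Set.Iic (indicesMissing S u)).indicator 1 := by
  funext A
  simp only [sum_biUnion_eq_sum_sub_sum_indicator, Pi.sub_apply, Pi.smul_apply, Set.mem_Iic,
    subset_univ, Set.indicator_of_mem, Pi.one_apply, smul_eq_mul, mul_one, Finset.sum_apply]
  ring

end coverage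

theorem dsft4_generalized_coverage {N U : Type*} [Fintype N] [DecidableEq N]
    [Fintype U] [DecidableEq U]
    (S : N → Finset U) (w : U → ℝ) (c : ℝ) (s : Finset N → ℝ)
    (hs : ∀ A : Finset N, s A = c + ∑ u ∈ A.biUnion S, w u) :
    (∀ B : Finset N, B.Nonempty →
      dsft4 s B = -∑ u ∈ B.inf S \ ((univ : Finset N) \ B).biUnion S, w u) ∧
    dsft4 s ∅ = s univ := by
  refine ⟨fun B hB => ?_, dsft4_empty s⟩
  have hBc : univ ≠ Bᶜ := fun h => hB.ne_empty ((compl_eq_univ_iff B).1 h.symm)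
  rw [funext hs, coverage_eq_sub_sum_indicator, dsft4_sub, dsft4_smul, dsft4_sum,
    dsft4_indicator_Iic, if_neg hBc, mul_zero, zero_sub]
  simp_rw [dsft4_smul, dsft4_indicator_Iic, indicesMissing_eq_compl_iff, mul_ite, mul_one, mul_zero]
  rw [sum_ite_mem, univ_inter]
end

section
/- Model-4 sampling theorem: let s be a set function on a finite set N whose type-4 spectrum ŝ is supported on a family B = {B₁,…,B_k} ⊆ 2^N, and let A = {N\B₁,…,N\B_k}. Then the k×k matrix M with entries M_{N\B_i, B_j} = (inverse type-4 DSFT)_{N\B_i, B_j} = [ (N\B_i) ∩ B_j = ∅ ] is invertible; consequently s is uniquely determined by its values on A among set functions with spectrum supported on B. -/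
open Finset

private lemma key4 {N : Type*} [Fintype N] [DecidableEq N] (Bi Bj : Finset N) :
    ((univ : Finset N) \ Bi) ∩ Bj = ∅ ↔ Bj ⊆ Bi := by
  simp only [Finset.eq_empty_iff_forall_notMem, Finset.mem_inter, Finset.mem_sdiff,
    Finset.mem_univ, true_and, Finset.subset_iff, not_and]
  constructor
  · intro h x hx
    by_contra hc
    exact h x hc hx
  · intro h x hx hxj
    exact hx (h hxj)

theorem model4_sampling {N : Type*} [Fintype N] [DecidableEq N] (k : ℕ)
    (B : Fin k → Finset N) (hB : Function.Injective B)
    (M : Matrix (Fin k) (Fin k) ℝ)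
    (hM : ∀ i j, M i j = if ((univ : Finset N) \ B i) ∩ B j = ∅ then 1 else 0) :
    IsUnit M ∧
      ∀ shat that : Fin k → ℝ,
        (∀ i : Fin k,
            (∑ j, if ((univ : Finset N) \ B i) ∩ B j = ∅ then shat j else 0) =
            (∑ j, if ((univ : Finset N) \ B i) ∩ B j = ∅ then that j else 0)) →
        ∀ A : Finset N,
            (∑ j, if A ∩ B j = ∅ then shat j else 0) =
            (∑ j, if A ∩ B j = ∅ then that j else 0) := by
  have hM' : ∀ i j, M i j = if B j ⊆ B i then 1 else 0 := by
    intro i j; rw [hM]; simp [key4]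
  -- key: mulVec kernel trivial
  have hker : ∀ v : Fin k → ℝ, M.mulVec v = 0 → v = 0 := by
    intro v hv
    have hrow : ∀ i, ∑ j, (if B j ⊆ B i then v j else 0) = 0 := by
      intro i
      have := congrFun hv i
      simpa [Matrix.mulVec, dotProduct, hM', ite_mul, one_mul, zero_mul] using this
    have main : ∀ n : ℕ, ∀ i : Fin k, (B i).card = n → v i = 0 := by
      intro n
      induction n using Nat.strong_induction_on with
      | _ n ih =>
        intro i hcard
        have hrowi := hrow i
        have hsplit : ∑ j, (if B j ⊆ B i then v j else 0) =
            v i + ∑ j ∈ univ.erase i, (if B j ⊆ B i then v j else 0) := by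
          rw [← Finset.add_sum_erase _ _ (Finset.mem_univ i)]
          simp
        have hrest : ∀ j ∈ univ.erase i, (if B j ⊆ B i then v j else 0) = 0 := by
          intro j hj
          by_cases hsub : B j ⊆ B i
          · have hne : B j ≠ B i := fun h => (Finset.mem_erase.mp hj).1 (hB h)
            have hlt : (B j).card < n := by
              rw [← hcard]
              exact Finset.card_lt_card (lt_of_le_of_ne hsub hne)
            simp [hsub, ih _ hlt j rfl]
          · simp [hsub]
        rw [hsplit, Finset.sum_eq_zero hrest, add_zero] at hrowi
        exact hrowi
    funext i
    exact main (B i).card i rfl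
  have hinj : Function.Injective M.mulVec := by
    intro x y hxy
    have : M.mulVec (x - y) = 0 := by
      rw [Matrix.mulVec_sub, hxy, sub_self]
    have := hker _ this
    exact sub_eq_zero.mp this
  have hunit : IsUnit M := Matrix.mulVec_injective_iff_isUnit.mp hinj
  refine ⟨hunit, ?_⟩
  intro shat that h A
  have heq : shat = that := by
    apply hinj
    funext i
    simp only [Matrix.mulVec, dotProduct, hM]
    simpa [ite_mul, one_mul, zero_mul] using h i
  rw [heq]
end
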